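/- arXiv:0810.5009 — 4 statements merged into one kernel-verified Lean document; each statement's English description precedes it below -/
import Mathlib

section
/- Let C₀ ⊂ ℝ² be a closed bounded convex set with nonempty interior and let P : ℝ² → C₀ be the metric projection onto C₀ (P u = u for u ∈ C₀, and P u is the nearest point of C₀ to u otherwise). Suppose W : ℝ² → ℝ is continuous and satisfies W(u) ≥ max_{v ∈ ∂C₀} W(v) for every u ∉ C₀. Then W(P u) ≤ W(u) for every u ∈ ℝ², and for every open set Ω ⊆ ℝ², every locally Lipschitz u : Ω → ℝ², and every measurable S ⊆ Ω, ∫_S (½‖D(P∘u)(x)‖² + W(P∘u(x))) dx ≤ ∫_S (½‖Du(x)‖² + W(u(x))) dx, where the derivatives exist almost everywhere by Rademacher's theorem and ‖·‖ denotes the Frobenius norm. -/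
/-!
A nearest-point map `P` onto a convex set satisfies the variational inequality
`⟪u - P u, v - P u⟫ ≤ 0` on the set, which makes it firmly nonexpansive and in particular
1-Lipschitz; hence by Rademacher's theorem `‖D(P ∘ u)‖ ≤ ‖Du‖` almost everywhere. A point outside
the set is projected onto its frontier (were `P u` interior, moving from it towards `u` would stay
in the set and get closer to `u`), where `W` is at most `W u`. The energy inequality is then the
integral of a pointwise inequality.
-/

open MeasureTheory Set
open scoped ENNReal NNReal

noncomputable section

abbrev E2 : Type := EuclideanSpace ℝ (Fin 2)

/-- Squared Frobenius norm of the differential of `u : ℝ² → ℝ²` at `x`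
(the domain `ℝ²` carries the coordinates `(x₁, x₂)`). -/
def gradSq (u : ℝ × ℝ → E2) (x : ℝ × ℝ) : ℝ :=
  ‖fderiv ℝ u x ((1 : ℝ), (0 : ℝ))‖ ^ 2 + ‖fderiv ℝ u x ((0 : ℝ), (1 : ℝ))‖ ^ 2

open Filter Topology
open scoped RealInnerProductSpace

section NearestPoint

variable {F : Type*} [NormedAddCommGroup F] [InnerProductSpace ℝ F] {K : Set F}

theorem real_inner_sub_le_zero_of_forall_norm_sub_le (hK : Convex ℝ K) {u p : F} (hp : p ∈ K)
    (hnear : ∀ v ∈ K, ‖u - p‖ ≤ ‖u - v‖) : ∀ w ∈ K, ⟪u - p, w - p⟫ ≤ 0 := by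
  have : Nonempty K := ⟨⟨p, hp⟩⟩
  refine (norm_eq_iInf_iff_real_inner_le_zero hK hp).1 (le_antisymm ?_ ?_)
  · exact le_ciInf fun w => hnear w w.2
  · exact ciInf_le ⟨0, forall_mem_range.2 fun _ => norm_nonneg _⟩ (⟨p, hp⟩ : K)

variable {P : F → F}

theorem norm_sub_sq_le_inner_of_forall_norm_sub_le (hK : Convex ℝ K) (hP : ∀ u, P u ∈ K)
    (hnear : ∀ u, ∀ v ∈ K, ‖u - P u‖ ≤ ‖u - v‖) (a b : F) :
    ‖P a - P b‖ ^ 2 ≤ ⟪a - b, P a - P b⟫ := by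
  have ha := real_inner_sub_le_zero_of_forall_norm_sub_le hK (hP a) (hnear a) (P b) (hP b)
  have hb := real_inner_sub_le_zero_of_forall_norm_sub_le hK (hP b) (hnear b) (P a) (hP a)
  have hsum : ⟪a - b, P a - P b⟫ - ‖P a - P b‖ ^ 2 =
      -(⟪a - P a, P b - P a⟫ + ⟪b - P b, P a - P b⟫) := by
    rw [← real_inner_self_eq_norm_sq]
    simp only [inner_sub_left, inner_sub_right]
    ring
  linarith

theorem lipschitzWith_one_of_forall_norm_sub_le (hK : Convex ℝ K) (hP : ∀ u, P u ∈ K)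
    (hnear : ∀ u, ∀ v ∈ K, ‖u - P u‖ ≤ ‖u - v‖) : LipschitzWith 1 P := by
  refine LipschitzWith.of_dist_le_mul fun a b => ?_
  rw [NNReal.coe_one, one_mul, dist_eq_norm, dist_eq_norm]
  have hsq : ‖P a - P b‖ ^ 2 ≤ ‖a - b‖ * ‖P a - P b‖ :=
    (norm_sub_sq_le_inner_of_forall_norm_sub_le hK hP hnear a b).trans (real_inner_le_norm _ _)
  nlinarith [norm_nonneg (a - b), norm_nonneg (P a - P b)]

end NearestPoint

theorem mem_frontier_of_forall_norm_sub_le {F : Type*} [NormedAddCommGroup F] [NormedSpace ℝ F]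
    {K : Set F} {u p : F} (hu : u ∉ K) (hp : p ∈ K) (hnear : ∀ v ∈ K, ‖u - p‖ ≤ ‖u - v‖) :
    p ∈ frontier K := by
  refine ⟨subset_closure hp, fun hint => ?_⟩
  have hline : Tendsto (fun t : ℝ => p + t • (u - p)) (𝓝[>] 0) (𝓝 p) :=
    ((continuous_const.add (continuous_id.smul continuous_const)).tendsto' 0 p
      (by simp)).mono_left nhdsWithin_le_nhds
  obtain ⟨t, hmem, ht0, ht1⟩ :=
    ((hline.eventually (mem_interior_iff_mem_nhds.1 hint)).and (Ioo_mem_nhdsGT one_pos)).exists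
  have hdist : ‖u - (p + t • (u - p))‖ = (1 - t) * ‖u - p‖ := by
    rw [show u - (p + t • (u - p)) = (1 - t) • (u - p) by module, norm_smul,
      Real.norm_of_nonneg (by linarith)]
  have hpos : 0 < ‖u - p‖ := norm_pos_iff.2 (sub_ne_zero.2 fun h => hu (h ▸ hp))
  have := hnear _ hmem
  nlinarith

theorem norm_fderiv_comp_apply_le {E F G : Type*} [NormedAddCommGroup E] [NormedSpace ℝ E]
    [NormedAddCommGroup F] [NormedSpace ℝ F] [NormedAddCommGroup G] [NormedSpace ℝ G]
    {L : F → G} {C : ℝ≥0} (hL : LipschitzWith C L) {f : E → F} {x : E}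
    (hf : DifferentiableAt ℝ f x) (e : E) :
    ‖fderiv ℝ (L ∘ f) x e‖ ≤ C * ‖fderiv ℝ f x e‖ := by
  by_cases hLf : DifferentiableAt ℝ (L ∘ f) x
  swap
  · rw [fderiv_zero_of_not_differentiableAt hLf, zero_apply, norm_zero]
    positivity
  have hLf_slope := (hasDerivAt_iff_tendsto_slope.1 (hLf.hasFDerivAt.hasLineDerivAt e)).norm
  have hf_slope := (hasDerivAt_iff_tendsto_slope.1 (hf.hasFDerivAt.hasLineDerivAt e)).norm
  refine le_of_tendsto_of_tendsto' hLf_slope (hf_slope.const_mul _) fun t => ?_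
  simp only [slope, vsub_eq_sub, Function.comp_apply, norm_smul, zero_smul, add_zero]
  rw [mul_left_comm]
  gcongr
  rw [← dist_eq_norm, ← dist_eq_norm]
  exact hL.dist_le_mul _ _

theorem gradSq_comp_le {L : E2 → E2} (hL : LipschitzWith 1 L) {f : ℝ × ℝ → E2} {x : ℝ × ℝ}
    (hf : DifferentiableAt ℝ f x) : gradSq (L ∘ f) x ≤ gradSq f x := by
  unfold gradSq
  gcongr <;> simpa using norm_fderiv_comp_apply_le hL hf _

section Rademacher

variable {E F : Type*} [NormedAddCommGroup E] [NormedSpace ℝ E] [FiniteDimensional ℝ E]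
  [MeasurableSpace E] [BorelSpace E] [NormedAddCommGroup F] [NormedSpace ℝ F]
  [FiniteDimensional ℝ F] {μ : Measure E} [μ.IsAddHaarMeasure] {f : E → F}

theorem LipschitzOnWith.ae_differentiableAt_of_mem_interior {C : ℝ≥0} {t : Set E}
    (hf : LipschitzOnWith C f t) : ∀ᵐ x ∂μ, x ∈ interior t → DifferentiableAt ℝ f x := by
  filter_upwards [(hf.mono interior_subset).ae_differentiableWithinAt_of_mem (μ := μ)]
    with x hx hxt
  exact (hx hxt).differentiableAt (isOpen_interior.mem_nhds hxt)

theorem LocallyLipschitzOn.ae_differentiableAt_of_mem {s : Set E} (hs : IsOpen s)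
    (hf : LocallyLipschitzOn s f) : ∀ᵐ x ∂μ, x ∈ s → DifferentiableAt ℝ f x := by
  simp only [ae_iff, Classical.not_imp]
  refine measure_null_of_locally_null _ fun x hx => ?_
  obtain ⟨C, t, ht, hft⟩ := hf hx.1
  rw [nhdsWithin_eq_nhds.2 (hs.mem_nhds hx.1)] at ht
  refine ⟨_ ∩ interior t, inter_mem_nhdsWithin _ (interior_mem_nhds.2 ht), ?_⟩
  refine measure_mono_null (fun y ⟨⟨_, hy⟩, hyt⟩ => ?_)
    (ae_iff.1 hft.ae_differentiableAt_of_mem_interior)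
  exact fun h => hy (h hyt)

end Rademacher

theorem projection_decreases_energy_general (C₀ : Set E2)
    (hC₀conv : Convex ℝ C₀)
    (P : E2 → E2)
    (hPmem : ∀ u, P u ∈ C₀)
    (hPid : ∀ u ∈ C₀, P u = u)
    (hPnear : ∀ u : E2, ∀ v ∈ C₀, ‖u - P u‖ ≤ ‖u - v‖)
    (W : E2 → ℝ)
    (hWout : ∀ u ∉ C₀, ∀ v ∈ frontier C₀, W v ≤ W u) :
    (∀ u : E2, W (P u) ≤ W u) ∧
    (∀ Ω : Set (ℝ × ℝ), IsOpen Ω → ∀ u : ℝ × ℝ → E2,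
      (∀ x ∈ Ω, ∃ K : ℝ≥0, ∃ t ∈ nhdsWithin x Ω, LipschitzOnWith K u t) →
      ∀ S : Set (ℝ × ℝ), MeasurableSet S → S ⊆ Ω →
        ∫⁻ x in S, ENNReal.ofReal ((1 / 2) * gradSq (P ∘ u) x + W (P (u x))) ≤
        ∫⁻ x in S, ENNReal.ofReal ((1 / 2) * gradSq u x + W (u x))) := by
  have hWP (u : E2) : W (P u) ≤ W u := by
    by_cases hu : u ∈ C₀
    · rw [hPid u hu]
    · exact hWout u hu (P u) (mem_frontier_of_forall_norm_sub_le hu (hPmem u) (hPnear u))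
  have hPlip : LipschitzWith 1 P := lipschitzWith_one_of_forall_norm_sub_le hC₀conv hPmem hPnear
  refine ⟨hWP, fun Ω hΩ u hu S hS hSΩ => lintegral_mono_ae ?_⟩
  have hu_diff : ∀ᵐ x, x ∈ Ω → DifferentiableAt ℝ u x :=
    LocallyLipschitzOn.ae_differentiableAt_of_mem hΩ hu
  filter_upwards [ae_restrict_mem hS, ae_restrict_of_ae hu_diff] with x hxS hx
  have hgrad := gradSq_comp_le hPlip (hx (hSΩ hxS))
  exact ENNReal.ofReal_le_ofReal (by linarith [hWP (u x)])

/-- Projection onto a closed bounded convex set `C₀` with nonempty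
interior does not increase `W` (when `W ≥ max_{∂C₀} W` outside `C₀`), nor the energy
`∫_S (½‖Du‖² + W(u))` of any locally Lipschitz map. -/
theorem projection_decreases_energy (C₀ : Set E2)
    (hC₀closed : IsClosed C₀) (hC₀bdd : Bornology.IsBounded C₀)
    (hC₀conv : Convex ℝ C₀) (hC₀int : (interior C₀).Nonempty)
    (P : E2 → E2)
    (hPmem : ∀ u, P u ∈ C₀)
    (hPid : ∀ u ∈ C₀, P u = u)
    (hPnear : ∀ u : E2, ∀ v ∈ C₀, ‖u - P u‖ ≤ ‖u - v‖)
    (W : E2 → ℝ) (hWcont : Continuous W)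
    (hWout : ∀ u ∉ C₀, ∀ v ∈ frontier C₀, W v ≤ W u) :
    (∀ u : E2, W (P u) ≤ W u) ∧
    (∀ Ω : Set (ℝ × ℝ), IsOpen Ω → ∀ u : ℝ × ℝ → E2,
      (∀ x ∈ Ω, ∃ K : ℝ≥0, ∃ t ∈ nhdsWithin x Ω, LipschitzOnWith K u t) →
      ∀ S : Set (ℝ × ℝ), MeasurableSet S → S ⊆ Ω →
        ∫⁻ x in S, ENNReal.ofReal ((1 / 2) * gradSq (P ∘ u) x + W (P (u x))) ≤
        ∫⁻ x in S, ENNReal.ofReal ((1 / 2) * gradSq u x + W (u x))) :=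
  projection_decreases_energy_general C₀ hC₀conv P hPmem hPid hPnear W hWout
end
end

section
/- Let W : ℝⁿ → ℝ be C², let a ∈ ℝⁿ with ∇W(a) = 0, and suppose there exist c > 0 and r₀ > 0 such that ⟨D²W(v)w, w⟩ ≥ c²|w|² for all w and all v with |v − a| ≤ r₀. Let Ω ⊆ ℝ^m be open and let u : Ω → ℝⁿ be a C² solution of Δu = ∇W(u) on Ω with |u(x) − a| ≤ r₀ for all x ∈ Ω. Then the function ρ(x) := |u(x) − a| is C² near every point x₀ with u(x₀) ≠ a, and at every such point it satisfies Δρ(x₀) ≥ c² ρ(x₀). -/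
/-!
Write `v := u - a` and `ρ := ‖v‖`. Differentiating `ρ² = ‖v‖²` twice in a direction `e` gives
`ρ ∂ₑ²ρ + (∂ₑρ)² = ⟪v, ∂ₑ²v⟫ + ‖∂ₑv‖²`, and `ρ ∂ₑρ = ⟪v, ∂ₑv⟫` with Cauchy–Schwarz gives
`|∂ₑρ| ≤ ‖∂ₑv‖`; summing over the coordinate directions yields `ρ Δρ ≥ ⟪v, Δu⟫ = ⟪v, ∇W(u)⟫`.
Integrating the Hessian bound along the segment from `a` to `u`, starting from `∇W(a) = 0`,
gives `⟪v, ∇W(u)⟫ ≥ c² ρ²`.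
-/

open MeasureTheory Filter Topology Set
open scoped RealInnerProductSpace ENNReal

noncomputable section

/-- The quadratic form of the Hessian of `W` at `v` evaluated at `w`: `⟨D²W(v)w, w⟩`. -/
def hessQF {n : ℕ} (W : EuclideanSpace ℝ (Fin n) → ℝ)
    (v w : EuclideanSpace ℝ (Fin n)) : ℝ :=
  fderiv ℝ (fun y => fderiv ℝ W y w) v w

/-- Componentwise Laplacian `Δf = ∑ᵢ ∂²f/∂xᵢ²` of a map defined on (an open subset of) `ℝᵐ`. -/
def lap {m : ℕ} {F : Type*} [NormedAddCommGroup F] [NormedSpace ℝ F]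
    (f : EuclideanSpace ℝ (Fin m) → F) (x : EuclideanSpace ℝ (Fin m)) : F :=
  ∑ i : Fin m, fderiv ℝ (fun y => fderiv ℝ f y (EuclideanSpace.single i 1)) x
    (EuclideanSpace.single i 1)

section HessianLowerBound

variable {E : Type*} [NormedAddCommGroup E] [NormedSpace ℝ E]

theorem Convex.mul_norm_sub_sq_le_fderiv_apply_sub {W : E → ℝ} (hW : ContDiff ℝ 2 W)
    {s : Set E} (hs : Convex ℝ s) {a p : E} (ha : a ∈ s) (hp : p ∈ s)
    (hWa : fderiv ℝ W a = 0) {k : ℝ}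
    (hk : ∀ v ∈ s, ∀ w, k * ‖w‖ ^ 2 ≤ fderiv ℝ (fun y => fderiv ℝ W y w) v w) :
    k * ‖p - a‖ ^ 2 ≤ fderiv ℝ W p (p - a) := by
  set g : ℝ → ℝ := fun t => fderiv ℝ W (a + t • (p - a)) (p - a)
  have hg : ∀ t, HasDerivAt g (fderiv ℝ (fun y => fderiv ℝ W y (p - a))
      (a + t • (p - a)) (p - a)) t := by
    intro t
    have hline : HasDerivAt (fun t : ℝ => a + t • (p - a)) (p - a) t := by
      simpa using ((hasDerivAt_id t).smul_const (p - a)).const_add a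
    have hDW : Differentiable ℝ fun y => fderiv ℝ W y (p - a) :=
      ((hW.fderiv_right le_rfl).differentiable one_ne_zero).clm_apply (differentiable_const _)
    exact (hDW _).hasFDerivAt.comp_hasDerivAt t hline
  have hgrowth := (convex_Icc (0 : ℝ) 1).mul_sub_le_image_sub_of_le_deriv
    (fun t _ => (hg t).continuousAt.continuousWithinAt)
    (fun t _ => (hg t).differentiableAt.differentiableWithinAt)
    (C := k * ‖p - a‖ ^ 2)
    (fun t ht => (hg t).deriv ▸ hk _ (hs.add_smul_sub_mem ha hp (interior_subset ht)) _)
    0 (by simp) 1 (by simp) zero_le_one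
  simpa [g, hWa] using hgrowth

end HessianLowerBound

section NormSecondDerivative

variable {G : Type*} [NormedAddCommGroup G] [NormedSpace ℝ G]
  {E : Type*} [NormedAddCommGroup E] [InnerProductSpace ℝ E] {f : G → E} {x : G}

theorem norm_mul_fderiv_norm_apply (hf : DifferentiableAt ℝ f x)
    (hρ : DifferentiableAt ℝ (fun y => ‖f y‖) x) (e : G) :
    ‖f x‖ * fderiv ℝ (fun y => ‖f y‖) x e = ⟪f x, fderiv ℝ f x e⟫ := by
  have h := (hρ.hasFDerivAt.pow 2).unique hf.hasFDerivAt.norm_sq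
  have he := congrArg (fun L => L e) h
  simp only [Nat.add_one_sub_one, pow_one, nsmul_eq_mul, Nat.cast_ofNat, smul_apply,
    smul_eq_mul, ContinuousLinearMap.comp_apply, coe_innerSL_apply] at he
  linarith

theorem norm_mul_fderiv_fderiv_norm_apply_add_sq (hf : ContDiffAt ℝ 2 f x)
    (hρ : ContDiffAt ℝ 2 (fun y => ‖f y‖) x) (e : G) :
    ‖f x‖ * fderiv ℝ (fun y => fderiv ℝ (fun z => ‖f z‖) y e) x e
      + fderiv ℝ (fun z => ‖f z‖) x e ^ 2 =
    ⟪f x, fderiv ℝ (fun y => fderiv ℝ f y e) x e⟫ + ‖fderiv ℝ f x e‖ ^ 2 := by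
  have hfirst : (fun y => ‖f y‖ * fderiv ℝ (fun z => ‖f z‖) y e) =ᶠ[𝓝 x]
      fun y => ⟪f y, fderiv ℝ f y e⟫ := by
    filter_upwards [hf.eventually (by simp), hρ.eventually (by simp)] with y hfy hρy
    exact norm_mul_fderiv_norm_apply (hfy.differentiableAt two_ne_zero)
      (hρy.differentiableAt two_ne_zero) e
  have hDf : DifferentiableAt ℝ (fun y => fderiv ℝ f y e) x :=
    ((hf.fderiv_right le_rfl).differentiableAt one_ne_zero).clm_apply
      (differentiableAt_const e)
  have hDρ : DifferentiableAt ℝ (fun y => fderiv ℝ (fun z => ‖f z‖) y e) x :=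
    ((hρ.fderiv_right le_rfl).differentiableAt one_ne_zero).clm_apply
      (differentiableAt_const e)
  have h := congrArg (fun L : G →L[ℝ] ℝ => L e) hfirst.fderiv_eq
  rw [fderiv_fun_mul (hρ.differentiableAt two_ne_zero) hDρ,
    fderiv_inner_apply ℝ (hf.differentiableAt two_ne_zero) hDf] at h
  simp only [add_apply, smul_apply, smul_eq_mul, real_inner_self_eq_norm_sq] at h
  linarith

theorem inner_le_norm_mul_fderiv_fderiv_norm_apply (hf : ContDiffAt ℝ 2 f x) (h0 : f x ≠ 0)
    (e : G) :
    ⟪f x, fderiv ℝ (fun y => fderiv ℝ f y e) x e⟫ ≤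
      ‖f x‖ * fderiv ℝ (fun y => fderiv ℝ (fun z => ‖f z‖) y e) x e := by
  have hρ : ContDiffAt ℝ 2 (fun y => ‖f y‖) x := hf.norm ℝ h0
  have hpos : 0 < ‖f x‖ := norm_pos_iff.2 h0
  have hDρ : |fderiv ℝ (fun z => ‖f z‖) x e| ≤ ‖fderiv ℝ f x e‖ := by
    refine le_of_mul_le_mul_left ?_ hpos
    calc ‖f x‖ * |fderiv ℝ (fun z => ‖f z‖) x e| = |⟪f x, fderiv ℝ f x e⟫| := by
          rw [← norm_mul_fderiv_norm_apply (hf.differentiableAt two_ne_zero)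
            (hρ.differentiableAt two_ne_zero), abs_mul, abs_norm]
      _ ≤ ‖f x‖ * ‖fderiv ℝ f x e‖ := abs_real_inner_le_norm _ _
  have hsq : fderiv ℝ (fun z => ‖f z‖) x e ^ 2 ≤ ‖fderiv ℝ f x e‖ ^ 2 :=
    sq_le_sq.2 (by rwa [abs_norm])
  linarith [norm_mul_fderiv_fderiv_norm_apply_add_sq hf hρ e]

end NormSecondDerivative

section Laplacian

variable {m : ℕ} {E : Type*} [NormedAddCommGroup E] [InnerProductSpace ℝ E]

theorem inner_lap_le_norm_mul_lap_norm {f : EuclideanSpace ℝ (Fin m) → E}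
    {x : EuclideanSpace ℝ (Fin m)} (hf : ContDiffAt ℝ 2 f x) (h0 : f x ≠ 0) :
    ⟪f x, lap f x⟫ ≤ ‖f x‖ * lap (fun y => ‖f y‖) x := by
  rw [lap, lap, inner_sum, Finset.mul_sum]
  exact Finset.sum_le_sum fun i _ => inner_le_norm_mul_fderiv_fderiv_norm_apply hf h0 _

theorem lap_sub_const (f : EuclideanSpace ℝ (Fin m) → E) (a : E) :
    lap (fun y => f y - a) = lap f := by
  funext x
  simp only [lap, fderiv_sub_const]

end Laplacian

theorem polar_radius_subsolution_general {m n : ℕ}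
    (W : EuclideanSpace ℝ (Fin n) → ℝ) (hW : ContDiff ℝ 2 W)
    (a : EuclideanSpace ℝ (Fin n)) (ha : gradient W a = 0)
    (c r₀ : ℝ)
    (hHess : ∀ v, ‖v - a‖ ≤ r₀ →
      ∀ w : EuclideanSpace ℝ (Fin n), c ^ 2 * ‖w‖ ^ 2 ≤ hessQF W v w)
    (Ω : Set (EuclideanSpace ℝ (Fin m))) (hΩ : IsOpen Ω)
    (u : EuclideanSpace ℝ (Fin m) → EuclideanSpace ℝ (Fin n))
    (hu : ContDiffOn ℝ 2 u Ω)
    (hsol : ∀ x ∈ Ω, lap u x = gradient W (u x))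
    (hnear : ∀ x ∈ Ω, ‖u x - a‖ ≤ r₀) :
    ∀ x₀ ∈ Ω, u x₀ ≠ a →
      ContDiffAt ℝ 2 (fun x => ‖u x - a‖) x₀ ∧
      c ^ 2 * ‖u x₀ - a‖ ≤ lap (fun x => ‖u x - a‖) x₀ := by
  intro x₀ hx₀ hne
  have hv : ContDiffAt ℝ 2 (fun x => u x - a) x₀ :=
    (hu.contDiffAt (hΩ.mem_nhds hx₀)).sub contDiffAt_const
  have hv0 : u x₀ - a ≠ 0 := sub_ne_zero.2 hne
  refine ⟨hv.norm ℝ hv0, ?_⟩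
  have hWa : fderiv ℝ W a = 0 := by simpa [gradient] using ha
  have hgrad : c ^ 2 * ‖u x₀ - a‖ ^ 2 ≤ ⟪u x₀ - a, gradient W (u x₀)⟫ := by
    rw [real_inner_comm, gradient, InnerProductSpace.toDual_symm_apply]
    exact (convex_closedBall a r₀).mul_norm_sub_sq_le_fderiv_apply_sub hW
      (Metric.mem_closedBall_self ((norm_nonneg _).trans (hnear x₀ hx₀)))
      (mem_closedBall_iff_norm.2 (hnear x₀ hx₀)) hWa
      fun v hv => hHess v (mem_closedBall_iff_norm.1 hv)
  have hlap := inner_lap_le_norm_mul_lap_norm hv hv0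
  rw [lap_sub_const, hsol x₀ hx₀] at hlap
  refine le_of_mul_le_mul_left ?_ (norm_pos_iff.2 hv0)
  calc ‖u x₀ - a‖ * (c ^ 2 * ‖u x₀ - a‖) = c ^ 2 * ‖u x₀ - a‖ ^ 2 := by ring
    _ ≤ ⟪u x₀ - a, gradient W (u x₀)⟫ := hgrad
    _ ≤ ‖u x₀ - a‖ * lap (fun x => ‖u x - a‖) x₀ := hlap

/-- If `W` is `C²` with `∇W(a) = 0` and Hessian `≥ c²` near `a`, and
`u : Ω → ℝⁿ` is a `C²` solution of `Δu = ∇W(u)` with `|u − a| ≤ r₀` on the open set `Ω`,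
then `ρ := |u − a|` is `C²` near every point where `u ≠ a` and satisfies `Δρ ≥ c²ρ` there. -/
theorem polar_radius_subsolution {m n : ℕ}
    (W : EuclideanSpace ℝ (Fin n) → ℝ) (hW : ContDiff ℝ 2 W)
    (a : EuclideanSpace ℝ (Fin n)) (ha : gradient W a = 0)
    (c r₀ : ℝ) (hc : 0 < c) (hr₀ : 0 < r₀)
    (hHess : ∀ v, ‖v - a‖ ≤ r₀ →
      ∀ w : EuclideanSpace ℝ (Fin n), c ^ 2 * ‖w‖ ^ 2 ≤ hessQF W v w)
    (Ω : Set (EuclideanSpace ℝ (Fin m))) (hΩ : IsOpen Ω)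
    (u : EuclideanSpace ℝ (Fin m) → EuclideanSpace ℝ (Fin n))
    (hu : ContDiffOn ℝ 2 u Ω)
    (hsol : ∀ x ∈ Ω, lap u x = gradient W (u x))
    (hnear : ∀ x ∈ Ω, ‖u x - a‖ ≤ r₀) :
    ∀ x₀ ∈ Ω, u x₀ ≠ a →
      ContDiffAt ℝ 2 (fun x => ‖u x - a‖) x₀ ∧
      c ^ 2 * ‖u x₀ - a‖ ≤ lap (fun x => ‖u x - a‖) x₀ :=
  polar_radius_subsolution_general W hW a ha c r₀ hHess Ω hΩ u hu hsol hnear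
end
end

section
/- Let c > 0, r > 0, R ≥ 1, and 1/2 < η < μ < ∞, and let C = [ηR, μR] × [−R, R]. Suppose v : C → ℝ is continuous on C, C² in the interior of C, admits one-sided normal derivatives on the boundary edges, and satisfies: Δv ≥ c² v in the interior of C; v(ηR, x₂) ≤ r for all x₂ ∈ [−R, R]; ∂v/∂x₂(x₁, R) ≤ 0 and ∂v/∂x₂(x₁, −R) ≥ 0 for all x₁ ∈ (ηR, μR]; and ∂v/∂x₁(μR, x₂) ≤ 0 for all x₂ ∈ (−R, R). Then for every (x₁, x₂) ∈ C, v(x₁, x₂) ≤ r · cosh(c(μR − x₁)) / cosh(c(μ − η)R). -/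
/-!
Compare `v` with `w(x) = r cosh(c(μR − x₁)) / cosh(c(μ − η)R)`, which solves `Δw = c²w`, equals `r`
on the left edge and has zero normal derivative on the other three. Adding
`ε (cosh(c(x₁ − ηR)) + cosh(c x₂))`, another solution of `Δφ = c²φ`, makes the outward normal
derivative of the barrier strictly positive there. Then `v − w − εφ` cannot have a positive
maximum on the rectangle: not on the left edge, where it is negative; not on the other edges, where
its one-sided normal derivative would have the wrong sign; and not inside, where `Δ(v − w − εφ) ≤ 0`
contradicts `Δ(v − w − εφ) ≥ c²(v − w − εφ) > 0`. Let `ε → 0`.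
-/

open Set Filter Topology

noncomputable section

/-- The Laplacian of a function of two real variables. -/
def lap2 (v : ℝ × ℝ → ℝ) (x : ℝ × ℝ) : ℝ :=
  fderiv ℝ (fun y => fderiv ℝ v y ((1 : ℝ), (0 : ℝ))) x (1, 0) +
  fderiv ℝ (fun y => fderiv ℝ v y ((0 : ℝ), (1 : ℝ))) x (0, 1)

theorem IsLocalMax.deriv_deriv_nonpos {f : ℝ → ℝ} {a : ℝ} (hmax : IsLocalMax f a)
    (hf : ContinuousAt f a) : deriv (deriv f) a ≤ 0 := by
  by_contra! hpos
  have hconst : f =ᶠ[𝓝 a] fun _ => f a :=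
    ((isLocalMin_of_deriv_deriv_pos hpos hmax.deriv_eq_zero hf).and hmax).mono
      fun _ h => le_antisymm h.2 h.1
  rw [hconst.deriv.deriv_eq] at hpos
  simp at hpos

theorem IsLocalMaxOn.derivWithin_Iic_nonneg {f : ℝ → ℝ} {a : ℝ}
    (hmax : IsLocalMaxOn f (Iic a) a) : 0 ≤ derivWithin f (Iic a) a := by
  have hmem : (-1 : ℝ) ∈ posTangentConeAt (Iic a) a :=
    mem_posTangentConeAt_of_segment_subset (by
      rw [segment_symm, segment_eq_Icc (by linarith)]
      exact fun z hz => hz.2)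
  simpa [fderivWithin_derivWithin] using hmax.fderivWithin_nonpos hmem

theorem IsLocalMaxOn.derivWithin_Ici_nonpos {f : ℝ → ℝ} {a : ℝ}
    (hmax : IsLocalMaxOn f (Ici a) a) : derivWithin f (Ici a) a ≤ 0 := by
  have hmem : (1 : ℝ) ∈ posTangentConeAt (Ici a) a :=
    mem_posTangentConeAt_of_segment_subset (by
      rw [segment_eq_Icc (by linarith)]
      exact fun z hz => hz.1)
  simpa [fderivWithin_derivWithin] using hmax.fderivWithin_nonpos hmem

theorem IsLocalMaxOn.deriv_le_derivWithin_Iic {f g : ℝ → ℝ} {a : ℝ}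
    (hmax : IsLocalMaxOn (fun t => f t - g t) (Iic a) a)
    (hf : DifferentiableWithinAt ℝ f (Iic a) a) (hg : DifferentiableAt ℝ g a) :
    deriv g a ≤ derivWithin f (Iic a) a := by
  have := hmax.derivWithin_Iic_nonneg
  rw [derivWithin_fun_sub hf hg.differentiableWithinAt,
    hg.derivWithin (uniqueDiffWithinAt_Iic a)] at this
  linarith

theorem IsLocalMaxOn.derivWithin_Ici_le_deriv {f g : ℝ → ℝ} {a : ℝ}
    (hmax : IsLocalMaxOn (fun t => f t - g t) (Ici a) a)
    (hf : DifferentiableWithinAt ℝ f (Ici a) a) (hg : DifferentiableAt ℝ g a) :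
    derivWithin f (Ici a) a ≤ deriv g a := by
  have := hmax.derivWithin_Ici_nonpos
  rw [derivWithin_fun_sub hf hg.differentiableWithinAt,
    hg.derivWithin (uniqueDiffWithinAt_Ici a)] at this
  linarith

section SecondDerivative

variable {E : Type*} [NormedAddCommGroup E] [NormedSpace ℝ E] {g u : E → ℝ} {x : E}

theorem ContDiffAt.eventually_differentiableAt (hg : ContDiffAt ℝ 2 g x) :
    ∀ᶠ y in 𝓝 x, DifferentiableAt ℝ g y :=
  (hg.eventually (by simp)).mono fun _ hy => hy.differentiableAt (by simp)

theorem ContDiffAt.differentiableAt_fderiv_apply (hg : ContDiffAt ℝ 2 g x) (e : E) :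
    DifferentiableAt ℝ (fun y => fderiv ℝ g y e) x :=
  ((hg.fderiv_right (m := 1) (by norm_num)).differentiableAt (by simp)).clm_apply
    (differentiableAt_const e)

theorem fderiv_fderiv_apply_sub (hg : ContDiffAt ℝ 2 g x) (hu : ContDiffAt ℝ 2 u x) (e : E) :
    fderiv ℝ (fun y => fderiv ℝ (g - u) y e) x e =
      fderiv ℝ (fun y => fderiv ℝ g y e) x e - fderiv ℝ (fun y => fderiv ℝ u y e) x e := by
  have hev : (fun y => fderiv ℝ (g - u) y e) =ᶠ[𝓝 x]
      fun y => fderiv ℝ g y e - fderiv ℝ u y e := by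
    filter_upwards [hg.eventually_differentiableAt, hu.eventually_differentiableAt]
      with y hgy huy
    rw [fderiv_sub hgy huy]
    rfl
  rw [hev.fderiv_eq, fderiv_fun_sub (hg.differentiableAt_fderiv_apply e)
    (hu.differentiableAt_fderiv_apply e)]
  rfl

theorem IsLocalMax.fderiv_fderiv_apply_nonpos (hmax : IsLocalMax g x) (hg : ContDiffAt ℝ 2 g x)
    (e : E) : fderiv ℝ (fun y => fderiv ℝ g y e) x e ≤ 0 := by
  have hline : ∀ t : ℝ, HasDerivAt (fun t : ℝ => x + t • e) e t := fun t => by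
    simpa using ((hasDerivAt_id t).smul_const e).const_add x
  have hcont : Continuous fun t : ℝ => x + t • e := by fun_prop
  have hfirst : deriv (fun t : ℝ => g (x + t • e)) =ᶠ[𝓝 0]
      fun t => fderiv ℝ g (x + t • e) e := by
    filter_upwards [(hcont.tendsto' 0 x (by simp)).eventually hg.eventually_differentiableAt]
      with t ht
    exact (ht.hasFDerivAt.comp_hasDerivAt t (hline t)).deriv
  have hsecond : HasDerivAt (fun t : ℝ => fderiv ℝ g (x + t • e) e)
      (fderiv ℝ (fun y => fderiv ℝ g y e) x e) 0 :=
    (hg.differentiableAt_fderiv_apply e).hasFDerivAt.comp_hasDerivAt_of_eq 0 (hline 0) (by simp)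
  have hmax' : IsLocalMax (fun t : ℝ => g (x + t • e)) 0 :=
    IsLocalMax.comp_continuous (by simpa using hmax) hcont.continuousAt
  rw [← hsecond.deriv, ← hfirst.deriv_eq]
  exact hmax'.deriv_deriv_nonpos (hg.continuousAt.comp_of_eq hcont.continuousAt (by simp))

end SecondDerivative

theorem lap2_sub {v u : ℝ × ℝ → ℝ} {x : ℝ × ℝ} (hv : ContDiffAt ℝ 2 v x)
    (hu : ContDiffAt ℝ 2 u x) : lap2 (v - u) x = lap2 v x - lap2 u x := by
  simp only [lap2, fderiv_fderiv_apply_sub hv hu]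
  ring

theorem IsLocalMax.lap2_nonpos {v : ℝ × ℝ → ℝ} {x : ℝ × ℝ} (hmax : IsLocalMax v x)
    (hv : ContDiffAt ℝ 2 v x) : lap2 v x ≤ 0 :=
  add_nonpos (hmax.fderiv_fderiv_apply_nonpos hv _) (hmax.fderiv_fderiv_apply_nonpos hv _)

theorem lap2_le_of_isLocalMax_sub {v u : ℝ × ℝ → ℝ} {x : ℝ × ℝ} (hmax : IsLocalMax (v - u) x)
    (hv : ContDiffAt ℝ 2 v x) (hu : ContDiffAt ℝ 2 u x) : lap2 v x ≤ lap2 u x := by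
  have := hmax.lap2_nonpos (hv.sub hu)
  rw [lap2_sub hv hu] at this
  linarith

theorem lap2_add_comp_fst_snd {f f' f'' h h' h'' : ℝ → ℝ}
    (hf : ∀ t, HasDerivAt f (f' t) t) (hf' : ∀ t, HasDerivAt f' (f'' t) t)
    (hh : ∀ t, HasDerivAt h (h' t) t) (hh' : ∀ t, HasDerivAt h' (h'' t) t) (x : ℝ × ℝ) :
    lap2 (fun y => f y.1 + h y.2) x = f'' x.1 + h'' x.2 := by
  have hD : ∀ y : ℝ × ℝ, HasFDerivAt (fun y : ℝ × ℝ => f y.1 + h y.2)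
      ((ContinuousLinearMap.smulRight 1 (f' y.1)).comp (ContinuousLinearMap.fst ℝ ℝ ℝ) +
        (ContinuousLinearMap.smulRight 1 (h' y.2)).comp (ContinuousLinearMap.snd ℝ ℝ ℝ)) y :=
    fun y => ((hf y.1).hasFDerivAt.comp y hasFDerivAt_fst).add
      ((hh y.2).hasFDerivAt.comp y hasFDerivAt_snd)
  have h1 : (fun y => fderiv ℝ (fun y : ℝ × ℝ => f y.1 + h y.2) y (1, 0)) = fun y => f' y.1 := by
    ext y; simp [(hD y).fderiv]
  have h2 : (fun y => fderiv ℝ (fun y : ℝ × ℝ => f y.1 + h y.2) y (0, 1)) = fun y => h' y.2 := by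
    ext y; simp [(hD y).fderiv]
  have h1' : HasFDerivAt (fun y : ℝ × ℝ => f' y.1) _ x :=
    (hf' x.1).hasFDerivAt.comp x hasFDerivAt_fst
  have h2' : HasFDerivAt (fun y : ℝ × ℝ => h' y.2) _ x :=
    (hh' x.2).hasFDerivAt.comp x hasFDerivAt_snd
  simp [lap2, h1, h2, h1'.fderiv, h2'.fderiv]

section Cosh

variable (c : ℝ)

theorem hasDerivAt_cosh_mul_sub (s t : ℝ) :
    HasDerivAt (fun t => Real.cosh (c * (t - s))) (c * Real.sinh (c * (t - s))) t :=
  (((hasDerivAt_id' t).sub_const s).const_mul c).cosh.congr_deriv (by ring)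

theorem hasDerivAt_mul_sinh_mul_sub (s t : ℝ) :
    HasDerivAt (fun t => c * Real.sinh (c * (t - s))) (c ^ 2 * Real.cosh (c * (t - s))) t :=
  ((((hasDerivAt_id' t).sub_const s).const_mul c).sinh.const_mul c).congr_deriv (by ring)

end Cosh

/-- `A cosh(c(x₁ − s)) + εφ(x)`: with `A = r / cosh(c(μ − η)R)`, `s = μR`, `s' = ηR` this is the
barrier `w + εφ` of the proof. -/
def coshBarrier (c s A s' ε : ℝ) (x : ℝ × ℝ) : ℝ :=
  A * Real.cosh (c * (x.1 - s)) + ε * (Real.cosh (c * (x.1 - s')) + Real.cosh (c * x.2))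

section Barrier

variable (c s A s' ε : ℝ)

theorem contDiff_coshBarrier : ContDiff ℝ 2 (coshBarrier c s A s' ε) := by
  unfold coshBarrier
  fun_prop

theorem hasDerivAt_coshBarrier_fst (t y : ℝ) :
    HasDerivAt (fun t => coshBarrier c s A s' ε (t, y))
      (A * (c * Real.sinh (c * (t - s))) + ε * (c * Real.sinh (c * (t - s')))) t :=
  ((hasDerivAt_cosh_mul_sub c s t).const_mul A).fun_add
    (((hasDerivAt_cosh_mul_sub c s' t).add_const (Real.cosh (c * y))).const_mul ε)

theorem hasDerivAt_coshBarrier_snd (x t : ℝ) :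
    HasDerivAt (fun t => coshBarrier c s A s' ε (x, t)) (ε * (c * Real.sinh (c * t))) t := by
  simpa [coshBarrier] using (((hasDerivAt_cosh_mul_sub c 0 t).const_add
    (Real.cosh (c * (x - s')))).const_mul ε).const_add (A * Real.cosh (c * (x - s)))

theorem lap2_coshBarrier (x : ℝ × ℝ) :
    lap2 (coshBarrier c s A s' ε) x = c ^ 2 * coshBarrier c s A s' ε x := by
  have hsep : coshBarrier c s A s' ε = fun y =>
      (A * Real.cosh (c * (y.1 - s)) + ε * Real.cosh (c * (y.1 - s'))) +
        ε * Real.cosh (c * (y.2 - 0)) := by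
    ext y; simp only [coshBarrier, sub_zero]; ring
  rw [hsep, lap2_add_comp_fst_snd
    (fun t => ((hasDerivAt_cosh_mul_sub c s t).const_mul A).fun_add
      ((hasDerivAt_cosh_mul_sub c s' t).const_mul ε))
    (fun t => ((hasDerivAt_mul_sinh_mul_sub c s t).const_mul A).fun_add
      ((hasDerivAt_mul_sinh_mul_sub c s' t).const_mul ε))
    (fun t => (hasDerivAt_cosh_mul_sub c 0 t).const_mul ε)
    (fun t => (hasDerivAt_mul_sinh_mul_sub c 0 t).const_mul ε)]
  ring

variable {c s A s' ε}

theorem mul_cosh_lt_coshBarrier (hε : 0 < ε) (x : ℝ × ℝ) :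
    A * Real.cosh (c * (x.1 - s)) < coshBarrier c s A s' ε x :=
  lt_add_of_pos_right _ (by positivity)

theorem le_of_forall_le_coshBarrier {a : ℝ} {x : ℝ × ℝ}
    (h : ∀ ε > 0, a ≤ coshBarrier c s A s' ε x) : a ≤ A * Real.cosh (c * (x.1 - s)) := by
  have hφ : 0 < Real.cosh (c * (x.1 - s')) + Real.cosh (c * x.2) := by positivity
  refine le_of_forall_pos_le_add fun δ hδ => ?_
  simpa [coshBarrier, div_mul_cancel₀ _ hφ.ne'] using h (δ / _) (div_pos hδ hφ)

theorem deriv_coshBarrier_snd_pos (hc : 0 < c) (hε : 0 < ε) {t : ℝ} (ht : 0 < t) (x : ℝ) :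
    0 < deriv (fun t => coshBarrier c s A s' ε (x, t)) t := by
  rw [(hasDerivAt_coshBarrier_snd ..).deriv]
  exact mul_pos hε (mul_pos hc (Real.sinh_pos_iff.2 (mul_pos hc ht)))

theorem deriv_coshBarrier_snd_neg (hc : 0 < c) (hε : 0 < ε) {t : ℝ} (ht : t < 0) (x : ℝ) :
    deriv (fun t => coshBarrier c s A s' ε (x, t)) t < 0 := by
  rw [(hasDerivAt_coshBarrier_snd ..).deriv]
  exact mul_neg_of_pos_of_neg hε (mul_neg_of_pos_of_neg hc
    (Real.sinh_neg_iff.2 (mul_neg_of_pos_of_neg hc ht)))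

theorem deriv_coshBarrier_fst_pos (hc : 0 < c) (hε : 0 < ε) (hs : s' < s) (y : ℝ) :
    0 < deriv (fun t => coshBarrier c s A s' ε (t, y)) s := by
  rw [(hasDerivAt_coshBarrier_fst ..).deriv, sub_self, mul_zero, Real.sinh_zero, mul_zero,
    mul_zero, zero_add]
  exact mul_pos hε (mul_pos hc (Real.sinh_pos_iff.2 (mul_pos hc (sub_pos.2 hs))))

end Barrier

theorem le_of_strict_comparison_rectangle {κ α β γ δ : ℝ} {v u : ℝ × ℝ → ℝ}
    (hκ : 0 < κ) (hγδ : γ < δ)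
    (hv : ContinuousOn v (Icc α β ×ˢ Icc γ δ)) (hv2 : ContDiffOn ℝ 2 v (Ioo α β ×ˢ Ioo γ δ))
    (hu : ContDiff ℝ 2 u)
    (hvsub : ∀ x ∈ Ioo α β ×ˢ Ioo γ δ, κ * v x ≤ lap2 v x)
    (husup : ∀ x ∈ Ioo α β ×ˢ Ioo γ δ, lap2 u x ≤ κ * u x)
    (hleft : ∀ y ∈ Icc γ δ, v (α, y) ≤ u (α, y))
    (htop : ∀ x ∈ Ioc α β, DifferentiableWithinAt ℝ (fun t => v (x, t)) (Iic δ) δ ∧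
      derivWithin (fun t => v (x, t)) (Iic δ) δ < deriv (fun t => u (x, t)) δ)
    (hbot : ∀ x ∈ Ioc α β, DifferentiableWithinAt ℝ (fun t => v (x, t)) (Ici γ) γ ∧
      deriv (fun t => u (x, t)) γ < derivWithin (fun t => v (x, t)) (Ici γ) γ)
    (hright : ∀ y ∈ Ioo γ δ, DifferentiableWithinAt ℝ (fun t => v (t, y)) (Iic β) β ∧
      derivWithin (fun t => v (t, y)) (Iic β) β < deriv (fun t => u (t, y)) β) :
    ∀ x ∈ Icc α β ×ˢ Icc γ δ, v x ≤ u x := by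
  by_contra! ⟨p, hp, hup⟩
  obtain ⟨⟨a, b⟩, ⟨⟨haα, haβ⟩, hbγ, hbδ⟩, hmax⟩ :=
    (isCompact_Icc.prod isCompact_Icc).exists_isMaxOn ⟨p, hp⟩ (hv.sub hu.continuous.continuousOn)
  have hpos : u (a, b) < v (a, b) := by
    have := hmax hp
    simp only [mem_ofPred_eq, Pi.sub_apply] at this
    linarith
  have hu1 : ∀ y, DifferentiableAt ℝ u y := hu.differentiable (by simp)
  rcases haα.eq_or_lt with rfl | haα
  · exact (hleft b ⟨hbγ, hbδ⟩).not_gt hpos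
  rcases hbδ.eq_or_lt with rfl | hbδ
  · have hloc : IsLocalMaxOn (fun t => v (a, t) - u (a, t)) (Iic b) b := by
      filter_upwards [Ioc_mem_nhdsLE hγδ] with t ht using hmax ⟨⟨haα.le, haβ⟩, ht.1.le, ht.2⟩
    obtain ⟨hd, hlt⟩ := htop a ⟨haα, haβ⟩
    exact (hloc.deriv_le_derivWithin_Iic hd ((hu1 _).comp b (by fun_prop))).not_gt hlt
  rcases hbγ.eq_or_lt with rfl | hbγ
  · have hloc : IsLocalMaxOn (fun t => v (a, t) - u (a, t)) (Ici γ) γ := by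
      filter_upwards [Ico_mem_nhdsGE hγδ] with t ht using hmax ⟨⟨haα.le, haβ⟩, ht.1, ht.2.le⟩
    obtain ⟨hd, hlt⟩ := hbot a ⟨haα, haβ⟩
    exact (hloc.derivWithin_Ici_le_deriv hd ((hu1 _).comp γ (by fun_prop))).not_gt hlt
  rcases haβ.eq_or_lt with rfl | haβ
  · have hloc : IsLocalMaxOn (fun t => v (t, b) - u (t, b)) (Iic a) a := by
      filter_upwards [Ioc_mem_nhdsLE haα] with t ht using hmax ⟨⟨ht.1.le, ht.2⟩, hbγ.le, hbδ.le⟩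
    obtain ⟨hd, hlt⟩ := hright b ⟨hbγ, hbδ⟩
    exact (hloc.deriv_le_derivWithin_Iic hd ((hu1 _).comp a (by fun_prop))).not_gt hlt
  have hint : Ioo α β ×ˢ Ioo γ δ ∈ 𝓝 (a, b) :=
    (isOpen_Ioo.prod isOpen_Ioo).mem_nhds ⟨⟨haα, haβ⟩, hbγ, hbδ⟩
  have hloc : IsLocalMax (v - u) (a, b) := mem_of_superset hint fun y hy =>
    hmax ⟨Ioo_subset_Icc_self hy.1, Ioo_subset_Icc_self hy.2⟩
  have hlap := lap2_le_of_isLocalMax_sub hloc (hv2.contDiffAt hint) hu.contDiffAt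
  have := hvsub (a, b) ⟨⟨haα, haβ⟩, hbγ, hbδ⟩
  have := husup (a, b) ⟨⟨haα, haβ⟩, hbγ, hbδ⟩
  nlinarith

theorem cosh_comparison_rectangle_general (c r R η μ : ℝ)
    (hc : 0 < c) (hR : 1 ≤ R) (hημ : η < μ)
    (v : ℝ × ℝ → ℝ)
    (hcont : ContinuousOn v (Icc (η * R) (μ * R) ×ˢ Icc (-R) R))
    (hC2 : ContDiffOn ℝ 2 v (Ioo (η * R) (μ * R) ×ˢ Ioo (-R) R))
    (hsub : ∀ x ∈ Ioo (η * R) (μ * R) ×ˢ Ioo (-R) R, c ^ 2 * v x ≤ lap2 v x)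
    (hleft : ∀ x₂ ∈ Icc (-R) R, v (η * R, x₂) ≤ r)
    (htop : ∀ x₁ ∈ Ioc (η * R) (μ * R),
      DifferentiableWithinAt ℝ (fun t => v (x₁, t)) (Iic R) R ∧
      derivWithin (fun t => v (x₁, t)) (Iic R) R ≤ 0)
    (hbot : ∀ x₁ ∈ Ioc (η * R) (μ * R),
      DifferentiableWithinAt ℝ (fun t => v (x₁, t)) (Ici (-R)) (-R) ∧
      0 ≤ derivWithin (fun t => v (x₁, t)) (Ici (-R)) (-R))
    (hright : ∀ x₂ ∈ Ioo (-R) R,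
      DifferentiableWithinAt ℝ (fun t => v (t, x₂)) (Iic (μ * R)) (μ * R) ∧
      derivWithin (fun t => v (t, x₂)) (Iic (μ * R)) (μ * R) ≤ 0) :
    ∀ x ∈ Icc (η * R) (μ * R) ×ˢ Icc (-R) R,
      v x ≤ r * Real.cosh (c * (μ * R - x.1)) / Real.cosh (c * (μ - η) * R) := by
  have hR0 : 0 < R := by linarith
  set K := Real.cosh (c * (μ - η) * R)
  have hleft' : ∀ y ∈ Icc (-R) R, v (η * R, y) ≤ r / K * Real.cosh (c * (η * R - μ * R)) := by
    rw [show c * (η * R - μ * R) = -(c * (μ - η) * R) by ring, Real.cosh_neg,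
      div_mul_cancel₀ _ (Real.cosh_pos _).ne']
    exact hleft
  have hbarrier : ∀ x ∈ Icc (η * R) (μ * R) ×ˢ Icc (-R) R, ∀ ε > 0,
      v x ≤ coshBarrier c (μ * R) (r / K) (η * R) ε x := fun x hx ε hε =>
    le_of_strict_comparison_rectangle (pow_pos hc 2) (by linarith) hcont hC2
      (contDiff_coshBarrier ..) hsub (fun x _ => (lap2_coshBarrier ..).le)
      (fun y hy => (hleft' y hy).trans (mul_cosh_lt_coshBarrier hε (_, y)).le)
      (fun x hx => ⟨(htop x hx).1,
        (htop x hx).2.trans_lt (deriv_coshBarrier_snd_pos hc hε hR0 x)⟩)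
      (fun x hx => ⟨(hbot x hx).1,
        (deriv_coshBarrier_snd_neg hc hε (by linarith) x).trans_le (hbot x hx).2⟩)
      (fun y hy => ⟨(hright y hy).1, (hright y hy).2.trans_lt
        (deriv_coshBarrier_fst_pos hc hε (by nlinarith) y)⟩)
      x hx
  intro x hx
  rw [mul_div_right_comm, ← Real.cosh_neg, neg_mul_eq_mul_neg, neg_sub]
  exact le_of_forall_le_coshBarrier (hbarrier x hx)

/-- Comparison estimate on the rectangle `C = [ηR, μR] × [−R, R]`:
if `Δv ≥ c²v` in the interior, `v ≤ r` on the left edge, and the outward normal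
derivative of `v` is nonpositive on the other three edges, then
`v(x₁,x₂) ≤ r cosh(c(μR − x₁)) / cosh(c(μ − η)R)` on `C`. -/
theorem cosh_comparison_rectangle (c r R η μ : ℝ)
    (hc : 0 < c) (hr : 0 < r) (hR : 1 ≤ R) (hη : 1 / 2 < η) (hημ : η < μ)
    (v : ℝ × ℝ → ℝ)
    (hcont : ContinuousOn v (Icc (η * R) (μ * R) ×ˢ Icc (-R) R))
    (hC2 : ContDiffOn ℝ 2 v (Ioo (η * R) (μ * R) ×ˢ Ioo (-R) R))
    (hsub : ∀ x ∈ Ioo (η * R) (μ * R) ×ˢ Ioo (-R) R, c ^ 2 * v x ≤ lap2 v x)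
    (hleft : ∀ x₂ ∈ Icc (-R) R, v (η * R, x₂) ≤ r)
    (htop : ∀ x₁ ∈ Ioc (η * R) (μ * R),
      DifferentiableWithinAt ℝ (fun t => v (x₁, t)) (Iic R) R ∧
      derivWithin (fun t => v (x₁, t)) (Iic R) R ≤ 0)
    (hbot : ∀ x₁ ∈ Ioc (η * R) (μ * R),
      DifferentiableWithinAt ℝ (fun t => v (x₁, t)) (Ici (-R)) (-R) ∧
      0 ≤ derivWithin (fun t => v (x₁, t)) (Ici (-R)) (-R))
    (hright : ∀ x₂ ∈ Ioo (-R) R,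
      DifferentiableWithinAt ℝ (fun t => v (t, x₂)) (Iic (μ * R)) (μ * R) ∧
      derivWithin (fun t => v (t, x₂)) (Iic (μ * R)) (μ * R) ≤ 0) :
    ∀ x ∈ Icc (η * R) (μ * R) ×ˢ Icc (-R) R,
      v x ≤ r * Real.cosh (c * (μ * R - x.1)) / Real.cosh (c * (μ - η) * R) :=
  cosh_comparison_rectangle_general c r R η μ hc hR hημ v hcont hC2 hsub hleft htop hbot hright
end
end

section
/- Let W : ℝ² → ℝ be C² with W ≥ 0, W(a^±) = 0 and ∇W(a^±) = 0, where a^± = (±a, 0), a > 0. Let e₊, e₋ : ℝ → ℝ² be C¹ maps with finite equal actions E(e₊) = E(e₋) = E_min < ∞, and suppose there exist K, k > 0 such that |e_±(t) − a⁺| + |e_±'(t)| ≤ K e^{−k t} for t ≥ 0 and |e_±(t) − a⁻| + |e_±'(t)| ≤ K e^{k t} for t ≤ 0. Define ũ : ℝ² → ℝ² by ũ(x₁, x₂) = e₊(x₁) for x₂ ≥ 1, ũ(x₁, x₂) = ((1 + x₂)/2) e₊(x₁) + ((1 − x₂)/2) e₋(x₁) for |x₂| ≤ 1, and ũ(x₁,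 x₂) = e₋(x₁) for x₂ ≤ −1. Then there exists a constant C, independent of R, such that for every R ≥ 1, ∫_{ℝ×(−R,R)} (½|∇ũ(x)|² + W(ũ(x))) dx ≤ 2R·E_min + C. -/
open MeasureTheory Set
open scoped ENNReal

noncomputable section

/-- The point `(x, y) ∈ ℝ²` as an element of `E2`. -/
def pt (x y : ℝ) : E2 := WithLp.toLp 2 ![x, y]

/-- The comparison map `ũ` interpolating between the connections `e₊` (for `x₂ ≥ 1`)
and `e₋` (for `x₂ ≤ −1`). -/
def tildeu (ep em : ℝ → E2) (x : ℝ × ℝ) : E2 :=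
  if 1 ≤ x.2 then ep x.1
  else if x.2 ≤ -1 then em x.1
  else ((1 + x.2) / 2) • ep x.1 + ((1 - x.2) / 2) • em x.1


/-!
Split the strip at `x₂ = ±1`. On `x₂ > 1` and on `x₂ < -1` the map `ũ` is `e₊` resp. `e₋` in the
variable `x₁`, so each of these strips carries exactly `(R - 1) E_min`. In the layer `|x₂| < 1`,
at abscissa `x₁` both connections lie within `K e^{-k|x₁|}` of the same well and have derivatives
of that size, hence by convexity so do `ũ`, `∂₁ũ` and `∂₂ũ = (e₊ - e₋) / 2`; as `W` vanishes to
second order at the wells, the energy density there is `O(e^{-2k|x₁|})`, whose integral is `C`.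
`E_min ≥ 0` because a connection between distinct wells cannot have zero action.
-/

open Filter Topology Metric

section Quadratic

variable {E : Type*} [NormedAddCommGroup E] [NormedSpace ℝ E] {W : E → ℝ} {p : E} {r M : ℝ}

lemma le_mul_norm_sub_sq_of_norm_fderiv_le (hW : Differentiable ℝ W) (hp : W p = 0)
    (hM : 0 ≤ M) (hW' : ∀ y ∈ closedBall p r, ‖fderiv ℝ W y‖ ≤ M * ‖y - p‖)
    {u : E} (hu : u ∈ closedBall p r) : W u ≤ M * ‖u - p‖ ^ 2 := by
  have hsub : closedBall p ‖u - p‖ ⊆ closedBall p r :=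
    closedBall_subset_closedBall (mem_closedBall_iff_norm.mp hu)
  have hbound : ∀ y ∈ closedBall p ‖u - p‖, ‖fderiv ℝ W y‖ ≤ M * ‖u - p‖ := fun y hy =>
    (hW' y (hsub hy)).trans (mul_le_mul_of_nonneg_left (mem_closedBall_iff_norm.mp hy) hM)
  have := (convex_closedBall p ‖u - p‖).norm_image_sub_le_of_norm_fderiv_le
    (fun y _ => hW.differentiableAt) hbound (mem_closedBall_self (norm_nonneg _))
    (mem_closedBall_iff_norm.mpr le_rfl)
  rw [hp, sub_zero] at this
  nlinarith [le_abs_self (W u), Real.norm_eq_abs (W u)]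

/-- The constant bounds the second derivative on the `r`-neighbourhood of `S`, which is compact. -/
lemma exists_le_mul_norm_sub_sq [ProperSpace E] (hW : ContDiff ℝ 2 W) {S : Set E}
    (hS : S.Finite) (hS0 : ∀ p ∈ S, W p = 0 ∧ fderiv ℝ W p = 0) (hr : 0 ≤ r) :
    ∃ M, 0 ≤ M ∧ ∀ p ∈ S, ∀ u ∈ closedBall p r, W u ≤ M * ‖u - p‖ ^ 2 := by
  have hW' : ContDiff ℝ 1 (fderiv ℝ W) := hW.fderiv_right (by norm_num)
  obtain ⟨M, hM⟩ := (hS.isCompact_biUnion fun p _ => isCompact_closedBall p r)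
    |>.exists_bound_of_continuousOn (hW'.continuous_fderiv one_ne_zero).continuousOn
  refine ⟨max M 0, le_max_right _ _, fun p hp u hu => le_mul_norm_sub_sq_of_norm_fderiv_le
    (hW.differentiable (by norm_num)) (hS0 p hp).1 (le_max_right _ _) (fun y hy => ?_) hu⟩
  have hball : ∀ z ∈ closedBall p r, ‖fderiv ℝ (fderiv ℝ W) z‖ ≤ max M 0 := fun z hz =>
    (hM z (mem_biUnion hp hz)).trans (le_max_left _ _)
  simpa [(hS0 p hp).2] using (convex_closedBall p r).norm_image_sub_le_of_norm_fderiv_le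
    (fun z _ => (hW'.differentiable one_ne_zero).differentiableAt) hball
    (mem_closedBall_self hr) hy

end Quadratic

section Decay

variable {E : Type*} [NormedAddCommGroup E] {f g : ℝ → E} {p q : E} {K k : ℝ}

lemma tendsto_atTop_of_norm_sub_le_exp (hk : 0 < k)
    (h : ∀ t, 0 ≤ t → ‖f t - p‖ ≤ K * Real.exp (-k * t)) : Tendsto f atTop (𝓝 p) := by
  have hexp : Tendsto (fun t => K * Real.exp (-k * t)) atTop (𝓝 0) := by
    simpa using (Real.tendsto_exp_atBot.comp
      (tendsto_id.const_mul_atTop_of_neg (neg_neg_of_pos hk))).const_mul K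
  exact tendsto_iff_norm_sub_tendsto_zero.mpr <| squeeze_zero'
    (Eventually.of_forall fun _ => norm_nonneg _) (eventually_ge_atTop 0 |>.mono h) hexp

lemma tendsto_atBot_of_norm_sub_le_exp (hk : 0 < k)
    (h : ∀ t, t ≤ 0 → ‖f t - q‖ ≤ K * Real.exp (k * t)) : Tendsto f atBot (𝓝 q) := by
  have hexp : Tendsto (fun t => K * Real.exp (k * t)) atBot (𝓝 0) := by
    simpa using (Real.tendsto_exp_atBot.comp (tendsto_id.const_mul_atBot hk)).const_mul K
  exact tendsto_iff_norm_sub_tendsto_zero.mpr <| squeeze_zero'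
    (Eventually.of_forall fun _ => norm_nonneg _) (eventually_le_atBot 0 |>.mono h) hexp

variable [NormedSpace ℝ E]

lemma exists_mem_pair_norm_sub_add_norm_deriv_le
    (hpos : ∀ t, 0 ≤ t →
      ‖f t - p‖ + ‖deriv f t‖ ≤ K * Real.exp (-k * t) ∧
      ‖g t - p‖ + ‖deriv g t‖ ≤ K * Real.exp (-k * t))
    (hneg : ∀ t, t ≤ 0 →
      ‖f t - q‖ + ‖deriv f t‖ ≤ K * Real.exp (k * t) ∧
      ‖g t - q‖ + ‖deriv g t‖ ≤ K * Real.exp (k * t)) (t : ℝ) :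
    ∃ w ∈ ({p, q} : Set E),
      ‖f t - w‖ + ‖deriv f t‖ ≤ K * Real.exp (-k * |t|) ∧
      ‖g t - w‖ + ‖deriv g t‖ ≤ K * Real.exp (-k * |t|) := by
  rcases le_total 0 t with ht | ht
  · exact ⟨p, by simp, by simpa [abs_of_nonneg ht] using hpos t ht⟩
  · exact ⟨q, by simp, by simpa [abs_of_nonpos ht] using hneg t ht⟩

end Decay

section Energy

variable {E : Type*} [NormedAddCommGroup E] [NormedSpace ℝ E] {W : E → ℝ} {e : ℝ → E}

lemma continuous_ofReal_energy (hW : Continuous W) (he : ContDiff ℝ 1 e) :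
    Continuous fun t => ENNReal.ofReal ((1 / 2) * ‖deriv e t‖ ^ 2 + W (e t)) := by
  have := he.continuous_deriv le_rfl
  exact ENNReal.continuous_ofReal.comp (by fun_prop)

lemma lintegral_energy_ne_zero (hW : Continuous W) (hW0 : ∀ u, 0 ≤ W u) (he : ContDiff ℝ 1 e)
    {p q : E} (hp : Tendsto e atTop (𝓝 p)) (hq : Tendsto e atBot (𝓝 q)) (hpq : p ≠ q) :
    ∫⁻ t, ENNReal.ofReal ((1 / 2) * ‖deriv e t‖ ^ 2 + W (e t)) ≠ 0 := by
  intro h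
  have hcont := continuous_ofReal_energy hW he
  have hzero := (hcont.ae_eq_iff_eq volume continuous_zero).mp
    ((lintegral_eq_zero_iff hcont.measurable).mp h)
  have hderiv : ∀ t, deriv e t = 0 := fun t => by
    have := congrFun hzero t
    simp only [Pi.zero_apply, ENNReal.ofReal_eq_zero] at this
    exact norm_eq_zero.mp (by nlinarith [hW0 (e t), norm_nonneg (deriv e t)])
  have hconst : e = fun _ => e 0 :=
    funext fun t => is_const_of_deriv_eq_zero (he.differentiable one_ne_zero) hderiv t 0
  rw [hconst] at hp hq
  exact hpq ((tendsto_nhds_unique tendsto_const_nhds hp).symm.trans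
    (tendsto_nhds_unique tendsto_const_nhds hq))

end Energy

lemma fderiv_eq_zero_of_gradient_eq_zero {F : Type*} [NormedAddCommGroup F]
    [InnerProductSpace ℝ F] [CompleteSpace F] {f : F → ℝ} {x : F} (h : gradient f x = 0) :
    fderiv ℝ f x = 0 :=
  (InnerProductSpace.toDual ℝ F).symm.map_eq_zero_iff.mp h

section Strips

lemma setLIntegral_univ_prod_comp_fst (s : Set ℝ) {f : ℝ → ℝ≥0∞} (hf : Measurable f) :
    ∫⁻ x : ℝ × ℝ in univ ×ˢ s, f x.1 = volume s * ∫⁻ t, f t := by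
  rw [Measure.volume_eq_prod, ← Measure.prod_restrict, Measure.restrict_univ,
    lintegral_prod (fun z => f z.1) (hf.comp measurable_fst).aemeasurable]
  simp only [lintegral_const, Measure.restrict_apply MeasurableSet.univ, univ_inter]
  rw [lintegral_mul_const _ hf, mul_comm]

lemma setLIntegral_univ_prod_le_of_le_comp_fst {s : Set ℝ} {f : ℝ × ℝ → ℝ≥0∞} {g : ℝ → ℝ≥0∞}
    (hg : Measurable g) (hfg : ∀ x : ℝ × ℝ, x.2 ∈ s → f x ≤ g x.1) :
    ∫⁻ x in univ ×ˢ s, f x ≤ volume s * ∫⁻ t, g t :=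
  (setLIntegral_mono (hg.comp measurable_fst) fun x hx => hfg x hx.2).trans_eq
    (setLIntegral_univ_prod_comp_fst s hg)

lemma setLIntegral_univ_prod_Ioo_le (f : ℝ × ℝ → ℝ≥0∞) (R : ℝ) :
    ∫⁻ x in univ ×ˢ Ioo (-R) R, f x ≤
      (∫⁻ x in univ ×ˢ Ioo (-R) (-1), f x) + (∫⁻ x in univ ×ˢ Ioo (-1) 1, f x) +
        ∫⁻ x in univ ×ˢ Ioo 1 R, f x := by
  have hlines : volume (univ ×ˢ {-1, 1} : Set (ℝ × ℝ)) = 0 := by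
    rw [Measure.volume_eq_prod, Measure.prod_prod, (toFinite ({-1, 1} : Set ℝ)).measure_zero,
      mul_zero]
  have hcover : (univ ×ˢ Ioo (-R) R : Set (ℝ × ℝ)) ≤ᵐ[volume]
      (univ ×ˢ Ioo (-R) (-1) ∪ univ ×ˢ Ioo (-1) 1 ∪ univ ×ˢ Ioo 1 R : Set (ℝ × ℝ)) := by
    refine ae_le_set.mpr (measure_mono_null (fun x hx => ?_) hlines)
    simp only [Set.mem_sdiff, mem_prod, mem_univ, true_and, mem_union, mem_Ioo, not_or,
      not_and_or, not_lt] at hx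
    simp only [mem_prod, mem_univ, true_and, mem_insert_iff, mem_singleton_iff]
    rcases hx with ⟨⟨h1, h2⟩, ⟨h3 | h3, h4 | h4⟩, h5 | h5⟩ <;>
      first | (left; linarith) | (right; linarith)
  calc ∫⁻ x in univ ×ˢ Ioo (-R) R, f x
      ≤ ∫⁻ x in univ ×ˢ Ioo (-R) (-1) ∪ univ ×ˢ Ioo (-1) 1 ∪ univ ×ˢ Ioo 1 R, f x :=
        lintegral_mono_set' hcover
    _ ≤ _ := (lintegral_union_le _ _ _).trans (add_le_add (lintegral_union_le _ _ _) le_rfl)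

lemma integrable_exp_neg_mul_abs {b : ℝ} (hb : 0 < b) :
    Integrable fun t : ℝ => Real.exp (-b * |t|) := by
  rw [← integrableOn_univ, ← Iic_union_Ioi (a := (0 : ℝ)), integrableOn_union]
  constructor
  · refine (integrableOn_exp_mul_Iic hb 0).congr_fun (fun t ht => ?_) measurableSet_Iic
    simp [abs_of_nonpos (mem_Iic.mp ht)]
  · refine (integrableOn_exp_mul_Ioi (neg_neg_of_pos hb) 0).congr_fun (fun t ht => ?_)
      measurableSet_Ioi
    simp [abs_of_pos (mem_Ioi.mp ht)]

end Strips

/-- `x, y` are the values and `x', y'` the derivatives of the two connections, `q` the well both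
are close to. -/
lemma energy_convexComb_le {E : Type*} [NormedAddCommGroup E] [NormedSpace ℝ E] {W : E → ℝ}
    {q : E} {r M ε : ℝ} (hW : ∀ u ∈ closedBall q r, W u ≤ M * ‖u - q‖ ^ 2) (hM : 0 ≤ M)
    (hεr : ε ≤ r) {x y x' y' : E} (hx : ‖x - q‖ ≤ ε) (hy : ‖y - q‖ ≤ ε) (hx' : ‖x'‖ ≤ ε)
    (hy' : ‖y'‖ ≤ ε) {α β : ℝ} (hα : 0 ≤ α) (hβ : 0 ≤ β) (hαβ : α + β = 1) :
    (1 / 2) * (‖α • x' + β • y'‖ ^ 2 + ‖(1 / 2 : ℝ) • (x - y)‖ ^ 2) + W (α • x + β • y) ≤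
      (1 + M) * ε ^ 2 := by
  have hderiv : ‖α • x' + β • y'‖ ≤ ε := by
    simpa using convex_closedBall (0 : E) ε (by simpa using hx') (by simpa using hy') hα hβ hαβ
  have hval : α • x + β • y ∈ closedBall q ε :=
    convex_closedBall q ε (mem_closedBall_iff_norm.mpr hx) (mem_closedBall_iff_norm.mpr hy)
      hα hβ hαβ
  have hdiff : ‖(1 / 2 : ℝ) • (x - y)‖ ≤ ε := by
    have := norm_sub_le_norm_sub_add_norm_sub x q y
    rw [norm_sub_rev q y] at this
    rw [norm_smul, Real.norm_of_nonneg (by norm_num)]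
    linarith
  have hWval : W (α • x + β • y) ≤ M * ε ^ 2 :=
    (hW _ (closedBall_subset_closedBall hεr hval)).trans <| mul_le_mul_of_nonneg_left
      (pow_le_pow_left₀ (norm_nonneg _) (mem_closedBall_iff_norm.mp hval) 2) hM
  nlinarith [pow_le_pow_left₀ (norm_nonneg _) hderiv 2, pow_le_pow_left₀ (norm_nonneg _) hdiff 2]

lemma pt_ne_pt_neg {a : ℝ} (ha : a ≠ 0) : pt a 0 ≠ pt (-a) 0 := fun h => by
  have := congrArg (fun v : E2 => v 0) h
  simp only [pt, PiLp.toLp_apply, Matrix.cons_val_zero] at this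
  exact ha (by linarith)

section ComparisonMap

variable {ep em : ℝ → E2} {x : ℝ × ℝ}

lemma gradSq_congr {u v : ℝ × ℝ → E2} (h : u =ᶠ[𝓝 x] v) : gradSq u x = gradSq v x := by
  rw [gradSq, gradSq, h.fderiv_eq]

lemma hasFDerivAt_comp_fst {F : Type*} [NormedAddCommGroup F] [NormedSpace ℝ F] {e : ℝ → F}
    (he : DifferentiableAt ℝ e x.1) :
    HasFDerivAt (fun y : ℝ × ℝ => e y.1)
      ((ContinuousLinearMap.toSpanSingleton ℝ (deriv e x.1)).comp
        (ContinuousLinearMap.fst ℝ ℝ ℝ)) x :=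
  he.hasDerivAt.hasFDerivAt.comp x hasFDerivAt_fst

lemma gradSq_comp_fst {e : ℝ → E2} (he : DifferentiableAt ℝ e x.1) :
    gradSq (fun y => e y.1) x = ‖deriv e x.1‖ ^ 2 := by
  simp [gradSq, (hasFDerivAt_comp_fst he).fderiv]

lemma gradSq_interpolation (hep : Differentiable ℝ ep) (hem : Differentiable ℝ em)
    (x : ℝ × ℝ) :
    gradSq (fun y => ((1 + y.2) / 2) • ep y.1 + ((1 - y.2) / 2) • em y.1) x =
      ‖((1 + x.2) / 2) • deriv ep x.1 + ((1 - x.2) / 2) • deriv em x.1‖ ^ 2 +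
        ‖(1 / 2 : ℝ) • (ep x.1 - em x.1)‖ ^ 2 := by
  have hsnd := hasFDerivAt_snd (𝕜 := ℝ) (E := ℝ) (F := ℝ) (p := x)
  have h := (((hsnd.const_add 1).mul_const 2⁻¹).smul (hasFDerivAt_comp_fst (hep x.1))).add
    (((hsnd.const_sub 1).mul_const 2⁻¹).smul (hasFDerivAt_comp_fst (hem x.1)))
  simp_rw [gradSq, div_eq_mul_inv]
  rw [HasFDerivAt.fderiv
    (f := fun y : ℝ × ℝ => ((1 + y.2) * 2⁻¹) • ep y.1 + ((1 - y.2) * 2⁻¹) • em y.1) h]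
  simp [sub_eq_add_neg]

lemma tildeu_eventuallyEq_of_one_lt (hx : 1 < x.2) :
    tildeu ep em =ᶠ[𝓝 x] fun y => ep y.1 := by
  filter_upwards [(isOpen_lt continuous_const continuous_snd).mem_nhds hx] with y hy
  simp [tildeu, hy.le]

lemma tildeu_eventuallyEq_of_lt_neg_one (hx : x.2 < -1) :
    tildeu ep em =ᶠ[𝓝 x] fun y => em y.1 := by
  filter_upwards [(isOpen_lt continuous_snd continuous_const).mem_nhds hx] with y hy
  simp [tildeu, hy.le, not_le.mpr (hy.trans (by norm_num : (-1 : ℝ) < 1))]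

lemma tildeu_eventuallyEq_of_mem_Ioo (hx : x.2 ∈ Ioo (-1) 1) :
    tildeu ep em =ᶠ[𝓝 x] fun y => ((1 + y.2) / 2) • ep y.1 + ((1 - y.2) / 2) • em y.1 := by
  filter_upwards [(isOpen_Ioo.preimage continuous_snd).mem_nhds hx] with y hy
  simp [tildeu, not_le.mpr hy.1, not_le.mpr hy.2]

variable {W : E2 → ℝ}

lemma setLIntegral_energy_tildeu_upper (hW : Continuous W) (hep : ContDiff ℝ 1 ep) (R : ℝ) :
    ∫⁻ x in univ ×ˢ Ioo 1 R,
        ENNReal.ofReal ((1 / 2) * gradSq (tildeu ep em) x + W (tildeu ep em x)) =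
      volume (Ioo 1 R) * ∫⁻ t, ENNReal.ofReal ((1 / 2) * ‖deriv ep t‖ ^ 2 + W (ep t)) := by
  rw [← setLIntegral_univ_prod_comp_fst _ (continuous_ofReal_energy hW hep).measurable]
  refine setLIntegral_congr_fun (MeasurableSet.univ.prod measurableSet_Ioo) fun x hx => ?_
  have h := tildeu_eventuallyEq_of_one_lt (ep := ep) (em := em) hx.2.1
  rw [gradSq_congr h, gradSq_comp_fst (hep.differentiable one_ne_zero x.1), h.eq_of_nhds]

lemma setLIntegral_energy_tildeu_lower (hW : Continuous W) (hem : ContDiff ℝ 1 em) (R : ℝ) :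
    ∫⁻ x in univ ×ˢ Ioo (-R) (-1),
        ENNReal.ofReal ((1 / 2) * gradSq (tildeu ep em) x + W (tildeu ep em x)) =
      volume (Ioo (-R) (-1)) * ∫⁻ t, ENNReal.ofReal ((1 / 2) * ‖deriv em t‖ ^ 2 + W (em t)) := by
  rw [← setLIntegral_univ_prod_comp_fst _ (continuous_ofReal_energy hW hem).measurable]
  refine setLIntegral_congr_fun (MeasurableSet.univ.prod measurableSet_Ioo) fun x hx => ?_
  have h := tildeu_eventuallyEq_of_lt_neg_one (ep := ep) (em := em) hx.2.2
  rw [gradSq_congr h, gradSq_comp_fst (hem.differentiable one_ne_zero x.1), h.eq_of_nhds]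

lemma energy_tildeu_le_of_mem_Ioo (hep : Differentiable ℝ ep) (hem : Differentiable ℝ em)
    {w : E2} {r M ε : ℝ} (hW : ∀ u ∈ closedBall w r, W u ≤ M * ‖u - w‖ ^ 2) (hM : 0 ≤ M)
    (hεr : ε ≤ r) (hdp : ‖ep x.1 - w‖ + ‖deriv ep x.1‖ ≤ ε)
    (hdm : ‖em x.1 - w‖ + ‖deriv em x.1‖ ≤ ε) (hx : x.2 ∈ Ioo (-1) 1) :
    (1 / 2) * gradSq (tildeu ep em) x + W (tildeu ep em x) ≤ (1 + M) * ε ^ 2 := by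
  have h := tildeu_eventuallyEq_of_mem_Ioo (ep := ep) (em := em) hx
  rw [gradSq_congr h, gradSq_interpolation hep hem, h.eq_of_nhds]
  exact energy_convexComb_le hW hM hεr (by linarith [norm_nonneg (deriv ep x.1)])
    (by linarith [norm_nonneg (deriv em x.1)]) (by linarith [norm_nonneg (ep x.1 - w)])
    (by linarith [norm_nonneg (em x.1 - w)]) (by linarith [hx.1]) (by linarith [hx.2]) (by ring)

lemma setLIntegral_energy_tildeu_le (hW : Continuous W) (hep : ContDiff ℝ 1 ep)
    (hem : ContDiff ℝ 1 em) {A : ℝ} (hA : 0 ≤ A)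
    (hEp : ∫⁻ t, ENNReal.ofReal ((1 / 2) * ‖deriv ep t‖ ^ 2 + W (ep t)) = ENNReal.ofReal A)
    (hEm : ∫⁻ t, ENNReal.ofReal ((1 / 2) * ‖deriv em t‖ ^ 2 + W (em t)) = ENNReal.ofReal A)
    {g : ℝ → ℝ} (hg : Continuous g) (hg_int : Integrable g) (hg0 : 0 ≤ g)
    (hmiddle : ∀ x : ℝ × ℝ, x.2 ∈ Ioo (-1) 1 →
      (1 / 2) * gradSq (tildeu ep em) x + W (tildeu ep em x) ≤ g x.1)
    {R : ℝ} (hR : 1 ≤ R) :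
    ∫⁻ x in univ ×ˢ Ioo (-R) R,
        ENNReal.ofReal ((1 / 2) * gradSq (tildeu ep em) x + W (tildeu ep em x)) ≤
      ENNReal.ofReal (2 * R * A + 2 * ∫ t, g t) := by
  set I := ∫ t, g t
  have hI : ∫⁻ t, ENNReal.ofReal (g t) = ENNReal.ofReal I :=
    (ofReal_integral_eq_lintegral_ofReal hg_int (ae_of_all _ hg0)).symm
  have hI0 : 0 ≤ I := integral_nonneg hg0
  calc _ ≤ _ := setLIntegral_univ_prod_Ioo_le _ R
    _ ≤ volume (Ioo (-R) (-1)) * ENNReal.ofReal A +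
          volume (Ioo (-1 : ℝ) 1) * ENNReal.ofReal I +
          volume (Ioo 1 R) * ENNReal.ofReal A := by
        rw [setLIntegral_energy_tildeu_lower hW hem, setLIntegral_energy_tildeu_upper hW hep,
          hEp, hEm, ← hI]
        gcongr
        exact setLIntegral_univ_prod_le_of_le_comp_fst
          (ENNReal.measurable_ofReal.comp hg.measurable)
          fun x hx => ENNReal.ofReal_le_ofReal (hmiddle x hx)
    _ = ENNReal.ofReal ((R - 1) * A + 2 * I + (R - 1) * A) := by
        rw [Real.volume_Ioo, Real.volume_Ioo, Real.volume_Ioo, ← ENNReal.ofReal_mul (by linarith),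
          ← ENNReal.ofReal_mul (by norm_num), ← ENNReal.ofReal_mul (by linarith),
          ← ENNReal.ofReal_add (mul_nonneg (by linarith) hA) (by positivity),
          ← ENNReal.ofReal_add (by nlinarith) (mul_nonneg (by linarith) hA)]
        ring_nf
    _ ≤ ENNReal.ofReal (2 * R * A + 2 * I) := ENNReal.ofReal_le_ofReal (by nlinarith)

end ComparisonMap

/-- If `e₊, e₋` are `C¹` maps with equal finite actions `E_min` and
exponential convergence to `a^±`, then the energy of the interpolating comparison map
`ũ` on the strip `ℝ × (−R, R)` is at most `2R·E_min + C` with `C` independent of `R`. -/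
theorem comparison_map_energy_bound
    (W : E2 → ℝ) (hW : ContDiff ℝ 2 W) (hWnonneg : ∀ u, 0 ≤ W u)
    (a : ℝ) (ha : 0 < a)
    (hWzero : W (pt a 0) = 0 ∧ W (pt (-a) 0) = 0)
    (hWcrit : gradient W (pt a 0) = 0 ∧ gradient W (pt (-a) 0) = 0)
    (ep em : ℝ → E2) (hep : ContDiff ℝ 1 ep) (hem : ContDiff ℝ 1 em)
    (Emin : ℝ)
    (hEp : ∫⁻ t : ℝ, ENNReal.ofReal ((1 / 2) * ‖deriv ep t‖ ^ 2 + W (ep t)) =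
      ENNReal.ofReal Emin)
    (hEm : ∫⁻ t : ℝ, ENNReal.ofReal ((1 / 2) * ‖deriv em t‖ ^ 2 + W (em t)) =
      ENNReal.ofReal Emin)
    (K k : ℝ) (hK : 0 < K) (hk : 0 < k)
    (hdecayp : ∀ t : ℝ, 0 ≤ t →
      ‖ep t - pt a 0‖ + ‖deriv ep t‖ ≤ K * Real.exp (-k * t) ∧
      ‖em t - pt a 0‖ + ‖deriv em t‖ ≤ K * Real.exp (-k * t))
    (hdecaym : ∀ t : ℝ, t ≤ 0 →
      ‖ep t - pt (-a) 0‖ + ‖deriv ep t‖ ≤ K * Real.exp (k * t) ∧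
      ‖em t - pt (-a) 0‖ + ‖deriv em t‖ ≤ K * Real.exp (k * t)) :
    ∃ C : ℝ, ∀ R : ℝ, 1 ≤ R →
      ∫⁻ x in (Set.univ ×ˢ Set.Ioo (-R) R),
          ENNReal.ofReal ((1 / 2) * gradSq (tildeu ep em) x + W (tildeu ep em x)) ≤
        ENNReal.ofReal (2 * R * Emin + C) := by
  have hEmin : 0 < Emin := ENNReal.ofReal_pos.mp <| pos_iff_ne_zero.mpr <| hEp ▸
    lintegral_energy_ne_zero hW.continuous hWnonneg hep
      (tendsto_atTop_of_norm_sub_le_exp hk fun t ht =>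
        (le_add_of_nonneg_right (norm_nonneg _)).trans (hdecayp t ht).1)
      (tendsto_atBot_of_norm_sub_le_exp hk fun t ht =>
        (le_add_of_nonneg_right (norm_nonneg _)).trans (hdecaym t ht).1) (pt_ne_pt_neg ha.ne')
  obtain ⟨M, hM, hWwells⟩ := exists_le_mul_norm_sub_sq hW (toFinite {pt a 0, pt (-a) 0})
    (by
      rintro p (rfl | rfl)
      exacts [⟨hWzero.1, fderiv_eq_zero_of_gradient_eq_zero hWcrit.1⟩,
        ⟨hWzero.2, fderiv_eq_zero_of_gradient_eq_zero hWcrit.2⟩]) hK.le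
  set g : ℝ → ℝ := fun t => (1 + M) * K ^ 2 * Real.exp (-(2 * k) * |t|)
  refine ⟨2 * ∫ t, g t, fun R hR => setLIntegral_energy_tildeu_le hW.continuous hep hem
    hEmin.le hEp hEm (by fun_prop) ((integrable_exp_neg_mul_abs (by positivity)).const_mul _)
    (fun t => by positivity) (fun x hx => ?_) hR⟩
  obtain ⟨w, hw, hdp, hdm⟩ :=
    exists_mem_pair_norm_sub_add_norm_deriv_le hdecayp hdecaym x.1
  have hεK : K * Real.exp (-k * |x.1|) ≤ K :=
    mul_le_of_le_one_right hK.le (Real.exp_le_one_iff.mpr (by nlinarith [abs_nonneg x.1]))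
  refine (energy_tildeu_le_of_mem_Ioo (hep.differentiable one_ne_zero)
    (hem.differentiable one_ne_zero) (hWwells w hw) hM hεK hdp hdm hx).trans_eq ?_
  rw [mul_pow, ← Real.exp_nat_mul]
  ring_nf
end
end
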